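/- Let (Ω, ℱ, P) be a probability space, E_1, …, E_m ∈ ℱ events, p' ∈ (0,1], and U_1, …, U_m i.i.d. Bernoulli(p') random variables that are independent of the σ-algebra generated by E_1, …, E_m. Set E'_k = E_k ∩ {U_k = 1}. Then for every integer r with 0 ≤ r ≤ m: P( (⋂_{k=1}^m (E'_k)^c) ∩ { #{k : ω ∈ E_k} ≥ r } ) ≤ (1 − p')^r. (Independent-thinning bound: if at least r of the events occur but none of their thinned versions does, then at least r independent Bernoulli(p') trials all failed.) -/

import Mathlib

open MeasureTheory ProbabilityTheory
open scoped Classical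

open Finset
open scoped ENNReal

/-! Partition `Ω` according to the set `S` of indices of the events that occur. On the cell of
`S`, no thinned event occurring means `U k = false` for all `k ∈ S`; as the `U k` are independent
of `σ(E)`, this has probability `(1 - p')^#S` times that of the cell, and only cells with
`r ≤ #S` meet the event in question. -/

theorem measure_le_of_forall_measure_inter_fiber_le {α β : Type*} [MeasurableSpace α]
    {μ : Measure α} [IsProbabilityMeasure μ] [Fintype β] {f : α → β}
    (hf : ∀ b, MeasurableSet (f ⁻¹' {b})) {T : Set α} {c : ℝ≥0∞}
    (hc : ∀ b, μ (T ∩ f ⁻¹' {b}) ≤ c * μ (f ⁻¹' {b})) : μ T ≤ c :=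
  calc μ T = μ (⋃ b, T ∩ f ⁻¹' {b}) := by
        rw [← Set.inter_iUnion, ← Set.preimage_iUnion, Set.iUnion_of_singleton,
          Set.preimage_univ, Set.inter_univ]
    _ ≤ ∑ b, μ (T ∩ f ⁻¹' {b}) := measure_iUnion_fintype_le μ _
    _ ≤ ∑ b, c * μ (f ⁻¹' {b}) := sum_le_sum fun b _ => hc b
    _ = c := by
      rw [← mul_sum, sum_measure_preimage_singleton _ fun b _ => hf b, coe_univ,
        Set.preimage_univ, measure_univ, mul_one]

section Bernoulli

variable {Ω ι : Type*} [MeasurableSpace Ω] {P : Measure Ω} [IsProbabilityMeasure P]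
  {U : ι → Ω → Bool} {p : ℝ}

theorem measure_preimage_false_of_measure_preimage_true {V : Ω → Bool} (hV : Measurable V)
    (hp : 0 ≤ p) (hVp : P (V ⁻¹' {true}) = ENNReal.ofReal p) :
    P (V ⁻¹' {false}) = ENNReal.ofReal (1 - p) := by
  have hcompl : V ⁻¹' {false} = (V ⁻¹' {true})ᶜ := by ext ω; simp
  rw [hcompl, prob_compl_eq_one_sub (hV (measurableSet_singleton true)), hVp,
    ENNReal.ofReal_sub _ hp, ENNReal.ofReal_one]

theorem measure_biInter_preimage_false (hU : iIndepFun U P) (hUmeas : ∀ k, Measurable (U k))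
    (hp : 0 ≤ p) (hUp : ∀ k, P (U k ⁻¹' {true}) = ENNReal.ofReal p) (S : Finset ι) :
    P (⋂ k ∈ S, U k ⁻¹' {false}) = ENNReal.ofReal (1 - p) ^ #S := by
  rw [hU.meas_biInter fun k _ => ⟨{false}, measurableSet_singleton false, rfl⟩,
    prod_congr rfl fun k _ =>
      measure_preimage_false_of_measure_preimage_true (hUmeas k) hp (hUp k),
    prod_const]

end Bernoulli

section Occurring

variable {Ω ι : Type*} [Fintype ι]

noncomputable def occurring (E : ι → Set Ω) (ω : Ω) : Finset ι :=
  univ.filter fun k => ω ∈ E k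

theorem measurableSet_occurring_preimage_singleton {m : MeasurableSpace Ω} {E : ι → Set Ω}
    (hE : ∀ k, MeasurableSet[m] (E k)) (S : Finset ι) :
    MeasurableSet[m] (occurring E ⁻¹' {S}) := by
  have hcell : occurring E ⁻¹' {S} = ⋂ k, {ω | ω ∈ E k ↔ k ∈ S} := by
    ext ω
    simp [occurring, Finset.ext_iff]
  rw [hcell]
  refine MeasurableSet.iInter fun k => ?_
  by_cases hk : k ∈ S
  · simp only [hk, iff_true]
    exact hE k
  · simp only [hk, iff_false]
    exact (hE k).compl

end Occurring

section Thinning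

variable {Ω ι : Type*} [Fintype ι] [MeasurableSpace Ω] {P : Measure Ω}
  [IsProbabilityMeasure P] {U : ι → Ω → Bool} {p : ℝ}

theorem measure_iInter_compl_thinned_inter_occurring_le (E : ι → Set Ω)
    (hU : iIndepFun U P) (hUmeas : ∀ k, Measurable (U k))
    (hp : 0 ≤ p) (hUp : ∀ k, P (U k ⁻¹' {true}) = ENNReal.ofReal p)
    (hUE : Indep (MeasurableSpace.comap (fun ω k => U k ω) MeasurableSpace.pi)
      (MeasurableSpace.generateFrom (Set.range E)) P) (S : Finset ι) :
    P ((⋂ k, (E k ∩ U k ⁻¹' {true})ᶜ) ∩ occurring E ⁻¹' {S})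
      ≤ ENNReal.ofReal (1 - p) ^ #S * P (occurring E ⁻¹' {S}) := by
  have hfail : MeasurableSet[MeasurableSpace.comap (fun ω k => U k ω) MeasurableSpace.pi]
      (⋂ k ∈ S, U k ⁻¹' {false}) :=
    MeasurableSpace.measurableSet_comap.2
      ⟨{g | ∀ k ∈ S, g k = false}, .of_discrete, by ext ω; simp⟩
  have hcell : MeasurableSet[MeasurableSpace.generateFrom (Set.range E)]
      (occurring E ⁻¹' {S}) := measurableSet_occurring_preimage_singleton
    (fun k => MeasurableSpace.measurableSet_generateFrom (Set.mem_range_self k)) S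
  calc _ ≤ P ((⋂ k ∈ S, U k ⁻¹' {false}) ∩ occurring E ⁻¹' {S}) := by
        refine measure_mono ?_
        rintro ω ⟨hthin, hS : occurring E ω = S⟩
        refine ⟨Set.mem_iInter₂.2 fun k hk => ?_, hS⟩
        have hEk : ω ∈ E k := by simpa [← hS, occurring] using hk
        simpa [hEk] using Set.mem_iInter.1 hthin k
    _ = _ := by
      rw [(hUE.indepSet_of_measurableSet hfail hcell).measure_inter_eq_mul,
        measure_biInter_preimage_false hU hUmeas hp hUp]

end Thinning

theorem independent_thinning_bound_general
    {Ω : Type*} [MeasurableSpace Ω] (P : Measure Ω) [IsProbabilityMeasure P]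
    (m : ℕ) (E : Fin m → Set Ω) (hE : ∀ k, MeasurableSet (E k))
    (p' : ℝ) (hp'0 : 0 < p') (hp'1 : p' ≤ 1)
    (U : Fin m → Ω → Bool) (hUmeas : ∀ k, Measurable (U k))
    (hUdist : ∀ k, P {ω | U k ω = true} = ENNReal.ofReal p')
    (hUiid : iIndepFun (fun k ω => U k ω) P)
    (hUindepE : Indep
      (MeasurableSpace.comap (fun ω (k : Fin m) => U k ω) MeasurableSpace.pi)
      (MeasurableSpace.generateFrom (Set.range E)) P)
    (r : ℕ) :
    P ((⋂ k, (E k ∩ {ω | U k ω = true})ᶜ) ∩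
        {ω | r ≤ (Finset.univ.filter fun k => ω ∈ E k).card})
      ≤ ENNReal.ofReal ((1 - p') ^ r) := by
  rw [ENNReal.ofReal_pow (by linarith)]
  refine measure_le_of_forall_measure_inter_fiber_le
    (measurableSet_occurring_preimage_singleton hE) fun S => ?_
  by_cases hS : r ≤ #S
  · calc _ ≤ P ((⋂ k, (E k ∩ U k ⁻¹' {true})ᶜ) ∩ occurring E ⁻¹' {S}) :=
          measure_mono (Set.inter_subset_inter_left _ Set.inter_subset_left)
      _ ≤ ENNReal.ofReal (1 - p') ^ #S * P (occurring E ⁻¹' {S}) :=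
          measure_iInter_compl_thinned_inter_occurring_le E hUiid hUmeas hp'0.le hUdist
            hUindepE S
      _ ≤ _ := mul_le_mul_left
          (pow_le_pow_of_le_one zero_le (ENNReal.ofReal_le_one.2 (by linarith)) hS) _
  · have hempty : (⋂ k, (E k ∩ {ω | U k ω = true})ᶜ) ∩
        {ω | r ≤ #(univ.filter fun k => ω ∈ E k)} ∩ occurring E ⁻¹' {S} = ∅ :=
      Set.eq_empty_of_forall_notMem fun ω ⟨⟨_, hrω⟩, hSω⟩ => hS (hSω ▸ hrω)
    simp [hempty]

/-- Independent-thinning bound: if `E'_k = E_k ∩ {U_k = 1}` where the `U_k` are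
i.i.d. `Bernoulli(p')` independent of `σ(E_1, …, E_m)`, then the probability that
at least `r` of the events `E_k` occur while none of the thinned events `E'_k`
occurs is at most `(1 - p')^r`. -/
theorem independent_thinning_bound
    {Ω : Type*} [MeasurableSpace Ω] (P : Measure Ω) [IsProbabilityMeasure P]
    (m : ℕ) (E : Fin m → Set Ω) (hE : ∀ k, MeasurableSet (E k))
    (p' : ℝ) (hp'0 : 0 < p') (hp'1 : p' ≤ 1)
    (U : Fin m → Ω → Bool) (hUmeas : ∀ k, Measurable (U k))
    (hUdist : ∀ k, P {ω | U k ω = true} = ENNReal.ofReal p')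
    (hUiid : iIndepFun (fun k ω => U k ω) P)
    (hUindepE : Indep
      (MeasurableSpace.comap (fun ω (k : Fin m) => U k ω) MeasurableSpace.pi)
      (MeasurableSpace.generateFrom (Set.range E)) P)
    (r : ℕ) (hr : r ≤ m) :
    P ((⋂ k, (E k ∩ {ω | U k ω = true})ᶜ) ∩
        {ω | r ≤ (Finset.univ.filter fun k => ω ∈ E k).card})
      ≤ ENNReal.ofReal ((1 - p') ^ r) :=
  independent_thinning_bound_general P m E hE p' hp'0 hp'1 U hUmeas hUdist hUiid hUindepE r
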